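/- arXiv:2411.09127 — 4 statements merged into one kernel-verified Lean document; each statement's English description precedes it below -/
import Mathlib

section
/- For fixed θ ∈ [0,1] and γ ∈ (0,1), the function J(π) = (1-θ)·log((1-θ)/(1-π)) + θ·log(θ/π) + log(1+(γ-1)(1-π)) on π ∈ (0,1) attains its minimum at π* = γθ/(1 + θ(γ-1)). -/
/-- For fixed `θ ∈ [0,1]` and `γ ∈ (0,1)`, the function
`J(π) = (1-θ)·log((1-θ)/(1-π)) + θ·log(θ/π) + log(1+(γ-1)(1-π))` on `π ∈ (0,1)`
attains its minimum at `π* = γθ/(1 + θ(γ-1))`. -/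
theorem flattening_minimizer (θ γ : ℝ) (hθ : θ ∈ Set.Icc (0:ℝ) 1)
    (hγ : γ ∈ Set.Ioo (0:ℝ) 1)
    (J : ℝ → ℝ)
    (hJ : ∀ π : ℝ, J π =
      (1 - θ) * Real.log ((1 - θ) / (1 - π)) + θ * Real.log (θ / π)
        + Real.log (1 + (γ - 1) * (1 - π)))
    (πstar : ℝ) (hπstar : πstar = γ * θ / (1 + θ * (γ - 1))) :
    ∀ π ∈ Set.Ioo (0:ℝ) 1, J πstar ≤ J π := by
  obtain ⟨hθ0, hθ1⟩ := hθ
  obtain ⟨hγ0, hγ1⟩ := hγ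
  intro π hπ
  obtain ⟨hπ0, hπ1⟩ := hπ
  have hπ1' : 0 < 1 - π := by linarith
  have hg : 0 < γ + (1 - γ) * π := by nlinarith
  have harg : ∀ x : ℝ, 1 + (γ - 1) * (1 - x) = γ + (1 - γ) * x := by intro x; ring
  have hlogg : Real.log (1 + (γ - 1) * (1 - π)) = Real.log (γ + (1 - γ) * π) := by
    rw [harg]
  rcases eq_or_lt_of_le hθ0 with h0 | h0
  · -- θ = 0
    have hp : πstar = 0 := by rw [hπstar, ← h0]; simp
    rw [hJ, hJ, hp, ← h0]
    simp only [sub_zero, zero_mul, add_zero, zero_add, one_mul, sub_self, div_one,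
      Real.log_one, harg]
    have : Real.log (γ * (1 - π)) ≤ Real.log (γ + (1 - γ) * π) := by
      apply Real.log_le_log (by positivity)
      nlinarith
    rw [Real.log_mul (ne_of_gt hγ0) (ne_of_gt hπ1')] at this
    rw [Real.log_div one_ne_zero (ne_of_gt hπ1'), Real.log_one]
    rw [show (1:ℝ) + (γ - 1) * 1 = γ by ring]
    linarith
  rcases eq_or_lt_of_le hθ1 with h1 | h1
  · -- θ = 1
    have hD : (1:ℝ) + θ * (γ - 1) = γ := by rw [h1]; ring
    have hp : πstar = 1 := by rw [hπstar, hD, h1, mul_one, div_self (ne_of_gt hγ0)]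
    rw [hJ, hJ, hp, h1]
    simp only [sub_self, zero_mul, zero_add, one_mul, div_one, sub_zero, mul_zero,
      add_zero, Real.log_one]
    have : Real.log π ≤ Real.log (γ + (1 - γ) * π) := by
      apply Real.log_le_log hπ0
      nlinarith
    rw [Real.log_div one_ne_zero (ne_of_gt hπ0), Real.log_one, hlogg]
    linarith
  · -- 0 < θ < 1
    have hθ1' : 0 < 1 - θ := by linarith
    have hD : 0 < 1 + θ * (γ - 1) := by nlinarith
    have hDne := ne_of_gt hD
    have hps0 : 0 < πstar := by rw [hπstar]; positivity
    have hps1 : 0 < 1 - πstar := by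
      rw [hπstar]; rw [sub_pos, div_lt_one hD]; nlinarith
    -- compute J πstar = (1-θ) * log γ
    have e1 : (1 - θ) / (1 - πstar) = 1 + θ * (γ - 1) := by
      rw [div_eq_iff hps1.ne', hπstar]; field_simp; ring
    have e2 : θ / πstar = (1 + θ * (γ - 1)) / γ := by
      rw [div_eq_div_iff hps0.ne' hγ0.ne', hπstar]; field_simp
    have e3 : 1 + (γ - 1) * (1 - πstar) = γ / (1 + θ * (γ - 1)) := by
      rw [eq_div_iff hDne, hπstar]; linear_combination (1 - γ) * div_mul_cancel₀ (γ * θ) hDne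
    have hJstar : J πstar = (1 - θ) * Real.log γ := by
      rw [hJ, e1, e2, e3, Real.log_div hDne (ne_of_gt hγ0),
        Real.log_div (ne_of_gt hγ0) hDne]
      ring
    rw [hJstar, hJ, hlogg,
      Real.log_div (ne_of_gt hθ1') (ne_of_gt hπ1'),
      Real.log_div (ne_of_gt h0) (ne_of_gt hπ0)]
    -- key concavity inequality
    set A : ℝ := γ * (1 - π) / (1 - θ) with hA
    set B : ℝ := π / θ with hB
    have hApos : 0 < A := by positivity
    have hBpos : 0 < B := by positivity
    have key := strictConcaveOn_log_Ioi.concaveOn.2 (Set.mem_Ioi.2 hApos)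
      (Set.mem_Ioi.2 hBpos) (le_of_lt hθ1') (le_of_lt h0) (by ring)
    simp only [smul_eq_mul] at key
    have hcomb : (1 - θ) * A + θ * B = γ + (1 - γ) * π := by
      rw [hA, hB]; field_simp; ring
    rw [hcomb] at key
    have hlogA : Real.log A = Real.log γ + Real.log (1 - π) - Real.log (1 - θ) := by
      rw [hA, Real.log_div (by positivity) (ne_of_gt hθ1'),
        Real.log_mul (ne_of_gt hγ0) (ne_of_gt hπ1')]
    have hlogB : Real.log B = Real.log π - Real.log θ := by
      rw [hB, Real.log_div (ne_of_gt hπ0) (ne_of_gt h0)]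
    rw [hlogA, hlogB] at key
    nlinarith [key]
end

section
/- For θ ∈ [0,1] and γ ∈ (0,1), if π*(θ) = γθ/(1+θ(γ-1)) then J(π*(θ); θ) = log γ − θ·log γ, where J(π;θ) = (1-θ)·log((1-θ)/(1-π)) + θ·log(θ/π) + log(1+(γ-1)(1-π)). -/
/-- For `θ ∈ [0,1]` and `γ ∈ (0,1)`, if `π*(θ) = γθ/(1+θ(γ-1))` then
`J(π*(θ); θ) = log γ − θ·log γ`. -/
theorem flattening_value_at_minimizer (θ γ : ℝ) (hθ : θ ∈ Set.Icc (0:ℝ) 1)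
    (hγ : γ ∈ Set.Ioo (0:ℝ) 1)
    (J : ℝ → ℝ)
    (hJ : ∀ π : ℝ, J π =
      (1 - θ) * Real.log ((1 - θ) / (1 - π)) + θ * Real.log (θ / π)
        + Real.log (1 + (γ - 1) * (1 - π)))
    (πstar : ℝ) (hπstar : πstar = γ * θ / (1 + θ * (γ - 1))) :
    J πstar = Real.log γ - θ * Real.log γ := by
  obtain ⟨hθ0, hθ1⟩ := hθ
  obtain ⟨hγ0, hγ1⟩ := hγ
  have hD : 0 < 1 + θ * (γ - 1) := by nlinarith
  have hDne : (1 + θ * (γ - 1)) ≠ 0 := ne_of_gt hD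
  rw [hJ, hπstar]
  have h1 : 1 - γ * θ / (1 + θ * (γ - 1)) = (1 - θ) / (1 + θ * (γ - 1)) := by
    field_simp; ring
  have h3 : 1 + (γ - 1) * ((1 - θ) / (1 + θ * (γ - 1))) = γ / (1 + θ * (γ - 1)) := by
    rw [eq_div_iff hDne, add_mul, mul_assoc, div_mul_cancel₀ _ hDne]; ring
  rw [h1, h3, Real.log_div (ne_of_gt hγ0) hDne]
  rcases eq_or_lt_of_le hθ0 with h0 | h0
  · rw [← h0]; simp
  rcases eq_or_lt_of_le hθ1 with h1' | h1'
  · rw [h1']; simp [div_self (ne_of_gt hγ0), Real.log_div (ne_of_gt hγ0) hDne]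
  have hθne : θ ≠ 0 := ne_of_gt h0
  have h1θ : (0:ℝ) < 1 - θ := by linarith
  have h2 : (1 - θ) / ((1 - θ) / (1 + θ * (γ - 1))) = 1 + θ * (γ - 1) := by
    field_simp
  have h4 : θ / (γ * θ / (1 + θ * (γ - 1))) = (1 + θ * (γ - 1)) / γ := by
    field_simp
  rw [h2, h4, Real.log_div hDne (ne_of_gt hγ0)]
  ring
end

section
/- Consider real-valued trajectories W_1(t), W_2(t) (finite-dimensional vectors) and θ_B(t), θ_{1i}(t) ∈ [0,1] solving the ODE system: Ẇ_{1i} = −θ_B θ_{1i} g_{1i} − λ w_{1i}, Ẇ_{2i} = −θ_B θ_{1i} g_{2i} − λ w_{2i}, θ̇_{1i} = −θ_B(d_i + R) − h_{1i}, θ̇_B = −(D + ‖θ_1‖₁ R) − να − h_B, where λ > 0, R ≥ R_m > 0, να ≥ 0. Suppose |w_{ji}ᵀ g_{ji}| ≤ η‖w_{ji}‖, |d_i| ≤ κ(‖w_{1i}‖+‖w_{2i}‖), |D| ≤ Σ_i θ_{1i} κ(‖w_{1i}‖+‖w_{2i}‖), θ_B h_B ≥ 0, θ_{1i} h_{1i}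 ≥ 0. Then along any trajectory in the set D_B = {Λ_B ≤ (1/2)·R_m²/(16(η+κ)²)} where Λ_B = (1/2)(‖W_1‖² + ‖W_2‖² + θ_B²), the Lie derivative satisfies Λ̇_B ≤ −λ(‖W_1‖² + ‖W_2‖²) − θ_B ‖θ_1‖₁ R_m/2 ≤ 0. -/
open RealInnerProductSpace

/-- Lyapunov decrease inequality for layer pruning (Theorem 2): along the
projected gradient dynamics, inside the set
`D_B = {Λ_B ≤ (1/2)·R_m²/(16(η+κ)²)}` with
`Λ_B = (1/2)(‖W₁‖² + ‖W₂‖² + θ_B²)`, the Lie derivative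
`Λ̇_B = Σ_i ⟪w_{1i}, ẇ_{1i}⟫ + Σ_i ⟪w_{2i}, ẇ_{2i}⟫ + θ_B·θ̇_B` satisfies
`Λ̇_B ≤ −λ(‖W₁‖² + ‖W₂‖²) − θ_B‖θ₁‖₁R_m/2 ≤ 0`. -/
theorem lyapunov_decrease_layer (m K : ℕ)
    (w1 w2 g1 g2 : Fin K → EuclideanSpace ℝ (Fin m))
    (θ1 d h1 : Fin K → ℝ) (θB D R Rm lam η κ ν α hB : ℝ)
    (hlam : 0 < lam) (hRm : 0 < Rm) (hR : Rm ≤ R) (hνα : 0 ≤ ν * α)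
    (hη : 0 < η) (hκ : 0 < κ)
    (hθB : θB ∈ Set.Icc (0:ℝ) 1) (hθ1 : ∀ i, θ1 i ∈ Set.Icc (0:ℝ) 1)
    (hg1 : ∀ i, |⟪w1 i, g1 i⟫| ≤ η * ‖w1 i‖)
    (hg2 : ∀ i, |⟪w2 i, g2 i⟫| ≤ η * ‖w2 i‖)
    (hd : ∀ i, |d i| ≤ κ * (‖w1 i‖ + ‖w2 i‖))
    (hD : |D| ≤ ∑ i, θ1 i * (κ * (‖w1 i‖ + ‖w2 i‖)))
    (hhB : 0 ≤ θB * hB) (hh1 : ∀ i, 0 ≤ θ1 i * h1 i)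
    -- the dynamics (17):
    (dw1 dw2 : Fin K → EuclideanSpace ℝ (Fin m)) (dθ1 : Fin K → ℝ) (dθB : ℝ)
    (hdw1 : ∀ i, dw1 i = -((θB * θ1 i) • g1 i) - lam • w1 i)
    (hdw2 : ∀ i, dw2 i = -((θB * θ1 i) • g2 i) - lam • w2 i)
    (hdθ1 : ∀ i, dθ1 i = -(θB * (d i + R)) - h1 i)
    (hdθB : dθB = -(D + (∑ i, θ1 i) * R) - ν * α - hB)
    -- inside the region `D_B`:
    (hreg : (1/2) * ((∑ i, ‖w1 i‖^2) + (∑ i, ‖w2 i‖^2) + θB^2)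
      ≤ (1/2) * Rm^2 / (16 * (η + κ)^2)) :
    (∑ i, ⟪w1 i, dw1 i⟫) + (∑ i, ⟪w2 i, dw2 i⟫) + θB * dθB
        ≤ -lam * ((∑ i, ‖w1 i‖^2) + (∑ i, ‖w2 i‖^2))
          - θB * (∑ i, θ1 i) * Rm / 2 ∧
      -lam * ((∑ i, ‖w1 i‖^2) + (∑ i, ‖w2 i‖^2))
          - θB * (∑ i, θ1 i) * Rm / 2 ≤ 0 := by
  obtain ⟨hθB0, hθB1⟩ := hθB
  have hApos : (0:ℝ) < η + κ := by linarith
  have h16 : (0:ℝ) < 16 * (η + κ)^2 := by positivity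
  have hS : (∑ j, ‖w1 j‖^2) + (∑ j, ‖w2 j‖^2) + θB^2 ≤ Rm^2 / (16 * (η + κ)^2) := by
    have h : (1/2) * Rm^2 / (16 * (η + κ)^2) = (1/2) * (Rm^2 / (16 * (η + κ)^2)) := by ring
    rw [h] at hreg; linarith
  have hkey : ∀ i, (η + κ) * (‖w1 i‖ + ‖w2 i‖) ≤ Rm / 2 := by
    intro i
    have h1 : ‖w1 i‖^2 ≤ ∑ j, ‖w1 j‖^2 :=
      Finset.single_le_sum (f := fun j => ‖w1 j‖^2) (fun j _ => sq_nonneg _) (Finset.mem_univ i)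
    have h2 : ‖w2 i‖^2 ≤ ∑ j, ‖w2 j‖^2 :=
      Finset.single_le_sum (f := fun j => ‖w2 j‖^2) (fun j _ => sq_nonneg _) (Finset.mem_univ i)
    have hsum : ‖w1 i‖^2 + ‖w2 i‖^2 ≤ Rm^2 / (16 * (η + κ)^2) := by
      nlinarith [sq_nonneg θB]
    have hc : (‖w1 i‖^2 + ‖w2 i‖^2) * (16 * (η + κ)^2) ≤ Rm^2 :=
      (le_div_iff₀ h16).mp hsum
    nlinarith [norm_nonneg (w1 i), norm_nonneg (w2 i),
      mul_nonneg (mul_nonneg hApos.le hApos.le) (sq_nonneg (‖w1 i‖ - ‖w2 i‖)),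
      mul_pos hApos hApos,
      mul_nonneg (mul_nonneg hApos.le (norm_nonneg (w1 i))) (norm_nonneg (w2 i))]
  have hθnn : ∀ i, (0:ℝ) ≤ θB * θ1 i := fun i => mul_nonneg hθB0 (hθ1 i).1
  have e1 : ∀ i, ⟪w1 i, dw1 i⟫ = -(θB * θ1 i * ⟪w1 i, g1 i⟫) - lam * ‖w1 i‖^2 := by
    intro i
    rw [hdw1 i, inner_sub_right, inner_neg_right, real_inner_smul_right,
      real_inner_smul_right, real_inner_self_eq_norm_sq]
  have e2 : ∀ i, ⟪w2 i, dw2 i⟫ = -(θB * θ1 i * ⟪w2 i, g2 i⟫) - lam * ‖w2 i‖^2 := by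
    intro i
    rw [hdw2 i, inner_sub_right, inner_neg_right, real_inner_smul_right,
      real_inner_smul_right, real_inner_self_eq_norm_sq]
  have b1 : ∀ i, ⟪w1 i, dw1 i⟫ ≤ θB * θ1 i * (η * ‖w1 i‖) - lam * ‖w1 i‖^2 := by
    intro i
    rw [e1 i]
    have h := (abs_le.mp (hg1 i)).1
    nlinarith [hθnn i]
  have b2 : ∀ i, ⟪w2 i, dw2 i⟫ ≤ θB * θ1 i * (η * ‖w2 i‖) - lam * ‖w2 i‖^2 := by
    intro i
    rw [e2 i]
    have h := (abs_le.mp (hg2 i)).1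
    nlinarith [hθnn i]
  have sum1 : (∑ i, ⟪w1 i, dw1 i⟫) ≤
      (∑ i, θB * θ1 i * (η * ‖w1 i‖)) - lam * ∑ i, ‖w1 i‖^2 := by
    calc (∑ i, ⟪w1 i, dw1 i⟫)
        ≤ ∑ i, (θB * θ1 i * (η * ‖w1 i‖) - lam * ‖w1 i‖^2) :=
          Finset.sum_le_sum (fun i _ => b1 i)
      _ = (∑ i, θB * θ1 i * (η * ‖w1 i‖)) - lam * ∑ i, ‖w1 i‖^2 := by
          rw [Finset.sum_sub_distrib, Finset.mul_sum]
  have sum2 : (∑ i, ⟪w2 i, dw2 i⟫) ≤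
      (∑ i, θB * θ1 i * (η * ‖w2 i‖)) - lam * ∑ i, ‖w2 i‖^2 := by
    calc (∑ i, ⟪w2 i, dw2 i⟫)
        ≤ ∑ i, (θB * θ1 i * (η * ‖w2 i‖) - lam * ‖w2 i‖^2) :=
          Finset.sum_le_sum (fun i _ => b2 i)
      _ = (∑ i, θB * θ1 i * (η * ‖w2 i‖)) - lam * ∑ i, ‖w2 i‖^2 := by
          rw [Finset.sum_sub_distrib, Finset.mul_sum]
  -- bound on θB * dθB
  have hDB : θB * dθB ≤
      (∑ i, θB * θ1 i * (κ * (‖w1 i‖ + ‖w2 i‖))) - θB * (∑ i, θ1 i) * R := by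
    rw [hdθB]
    have h1 : θB * (-D) ≤ θB * |D| :=
      mul_le_mul_of_nonneg_left (neg_le_abs D) hθB0
    have h2 : θB * |D| ≤ θB * ∑ i, θ1 i * (κ * (‖w1 i‖ + ‖w2 i‖)) :=
      mul_le_mul_of_nonneg_left hD hθB0
    have h3 : θB * (∑ i, θ1 i * (κ * (‖w1 i‖ + ‖w2 i‖)))
        = ∑ i, θB * θ1 i * (κ * (‖w1 i‖ + ‖w2 i‖)) := by
      rw [Finset.mul_sum]
      exact Finset.sum_congr rfl (fun i _ => by ring)
    have h4 : 0 ≤ θB * (ν * α) := mul_nonneg hθB0 hνα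
    have hexp : θB * (-(D + (∑ i, θ1 i) * R) - ν * α - hB)
        = θB * (-D) - θB * (∑ i, θ1 i) * R - θB * (ν * α) - θB * hB := by ring
    rw [hexp]
    linarith [h1, h2, h3.le, h3.ge]
  -- combine the per-index (η+κ) bounds
  have hcomb : (∑ i, θB * θ1 i * (η * ‖w1 i‖)) + (∑ i, θB * θ1 i * (η * ‖w2 i‖))
      + (∑ i, θB * θ1 i * (κ * (‖w1 i‖ + ‖w2 i‖)))
      ≤ θB * (∑ i, θ1 i) * (Rm / 2) := by
    have h1 : (∑ i, θB * θ1 i * (η * ‖w1 i‖)) + (∑ i, θB * θ1 i * (η * ‖w2 i‖))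
        + (∑ i, θB * θ1 i * (κ * (‖w1 i‖ + ‖w2 i‖)))
        = ∑ i, θB * θ1 i * ((η + κ) * (‖w1 i‖ + ‖w2 i‖)) := by
      rw [← Finset.sum_add_distrib, ← Finset.sum_add_distrib]
      exact Finset.sum_congr rfl (fun i _ => by ring)
    have h2 : (∑ i, θB * θ1 i * ((η + κ) * (‖w1 i‖ + ‖w2 i‖)))
        ≤ ∑ i, θB * θ1 i * (Rm / 2) :=
      Finset.sum_le_sum (fun i _ => mul_le_mul_of_nonneg_left (hkey i) (hθnn i))
    have h3 : (∑ i, θB * θ1 i * (Rm / 2)) = θB * (∑ i, θ1 i) * (Rm / 2) := by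
      rw [Finset.mul_sum, Finset.sum_mul]
    linarith [h1.le, h1.ge]
  have hT : (0:ℝ) ≤ ∑ i, θ1 i := Finset.sum_nonneg (fun i _ => (hθ1 i).1)
  have hθT : (0:ℝ) ≤ θB * (∑ i, θ1 i) := mul_nonneg hθB0 hT
  have hS1 : (0:ℝ) ≤ ∑ i, ‖w1 i‖^2 := Finset.sum_nonneg (fun i _ => sq_nonneg _)
  have hS2 : (0:ℝ) ≤ ∑ i, ‖w2 i‖^2 := Finset.sum_nonneg (fun i _ => sq_nonneg _)
  constructor
  · have hRterm : θB * (∑ i, θ1 i) * (Rm / 2) - θB * (∑ i, θ1 i) * R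
        ≤ -(θB * (∑ i, θ1 i) * Rm / 2) := by
      have h := mul_nonneg hθT (sub_nonneg.2 hR)
      have h2 : θB * (∑ i, θ1 i) * (R - Rm) = θB * (∑ i, θ1 i) * R - θB * (∑ i, θ1 i) * Rm := by
        ring
      linarith [h2 ▸ h]
    linarith [sum1, sum2, hDB, hcomb]
  · have h := mul_nonneg hlam.le (add_nonneg hS1 hS2)
    have h2 := mul_nonneg hθT hRm.le
    linarith
end

section
/- Consider the unit-pruning Lyapunov function Λ_U = (1/2)(‖w_{1i}‖² + ‖w_{2i}‖² + θ_{1i}²) and the dynamics ẇ_{1i} = −θ_B θ_{1i} g_{1i} − λ w_{1i}, ẇ_{2i} = −θ_B θ_{1i} g_{2i} − λ w_{2i}, θ̇_{1i} = −θ_B(d_i + R) − h_{1i}, with λ > 0, R ≥ R_m > 0, θ_B, θ_{1i} ∈ [0,1], θ_{1i}h_{1i} ≥ 0, |w_{ji}ᵀ g_{ji}| ≤ η‖w_{ji}‖, |d_i| ≤ κ(‖w_{1i}‖+‖w_{2i}‖). Then in the set D_U = {Λ_U ≤ (1/2)·R_m²/(16(η+κ)²)} the Lie derivative satisfies Λ̇_U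 ≤ −λ(‖w_{1i}‖² + ‖w_{2i}‖²) − θ_B θ_{1i} R_m/2 ≤ 0. -/
open RealInnerProductSpace
set_option maxHeartbeats 1000000

/-- Lyapunov decrease inequality for unit pruning (Theorem 3): inside the set
`D_U = {Λ_U ≤ (1/2)·R_m²/(16(η+κ)²)}` with
`Λ_U = (1/2)(‖w_{1i}‖² + ‖w_{2i}‖² + θ_{1i}²)`, the Lie derivative
`Λ̇_U = ⟪w_{1i}, ẇ_{1i}⟫ + ⟪w_{2i}, ẇ_{2i}⟫ + θ_{1i}·θ̇_{1i}` satisfies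
`Λ̇_U ≤ −λ(‖w_{1i}‖² + ‖w_{2i}‖²) − θ_B θ_{1i} R_m/2 ≤ 0`. -/
theorem lyapunov_decrease_unit (m : ℕ)
    (w1 w2 g1 g2 : EuclideanSpace ℝ (Fin m))
    (θ1 θB d R Rm lam η κ h1 : ℝ)
    (hlam : 0 < lam) (hRm : 0 < Rm) (hR : Rm ≤ R)
    (hη : 0 < η) (hκ : 0 < κ)
    (hθB : θB ∈ Set.Icc (0:ℝ) 1) (hθ1 : θ1 ∈ Set.Icc (0:ℝ) 1)
    (hg1 : |⟪w1, g1⟫| ≤ η * ‖w1‖)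
    (hg2 : |⟪w2, g2⟫| ≤ η * ‖w2‖)
    (hd : |d| ≤ κ * (‖w1‖ + ‖w2‖))
    (hh1 : 0 ≤ θ1 * h1)
    -- the dynamics:
    (dw1 dw2 : EuclideanSpace ℝ (Fin m)) (dθ1 : ℝ)
    (hdw1 : dw1 = -((θB * θ1) • g1) - lam • w1)
    (hdw2 : dw2 = -((θB * θ1) • g2) - lam • w2)
    (hdθ1 : dθ1 = -(θB * (d + R)) - h1)
    -- inside the region `D_U`:
    (hreg : (1/2) * (‖w1‖^2 + ‖w2‖^2 + θ1^2)
      ≤ (1/2) * Rm^2 / (16 * (η + κ)^2)) :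
    ⟪w1, dw1⟫ + ⟪w2, dw2⟫ + θ1 * dθ1
        ≤ -lam * (‖w1‖^2 + ‖w2‖^2) - θB * θ1 * Rm / 2 ∧
      -lam * (‖w1‖^2 + ‖w2‖^2) - θB * θ1 * Rm / 2 ≤ 0 := by
  obtain ⟨hB0, hB1⟩ := hθB
  obtain ⟨h10, h11⟩ := hθ1
  have e1 : ⟪w1, dw1⟫ = -(θB * θ1) * ⟪w1, g1⟫ - lam * ‖w1‖^2 := by
    rw [hdw1, inner_sub_right, inner_neg_right, inner_smul_right, inner_smul_right,
      real_inner_self_eq_norm_sq]; ring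
  have e2 : ⟪w2, dw2⟫ = -(θB * θ1) * ⟪w2, g2⟫ - lam * ‖w2‖^2 := by
    rw [hdw2, inner_sub_right, inner_neg_right, inner_smul_right, inner_smul_right,
      real_inner_self_eq_norm_sq]; ring
  have hn1 : (0:ℝ) ≤ ‖w1‖ := norm_nonneg _
  have hn2 : (0:ℝ) ≤ ‖w2‖ := norm_nonneg _
  have hηκ : (0:ℝ) < η + κ := by linarith
  have hsq : ‖w1‖^2 + ‖w2‖^2 ≤ Rm^2 / (16 * (η + κ)^2) := by
    have hx : (1/2) * Rm^2 / (16 * (η + κ)^2) = (Rm^2 / (16 * (η + κ)^2)) / 2 := by ring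
    rw [hx] at hreg
    nlinarith [sq_nonneg θ1]
  -- bound on the sum of norms
  have hsum : (η + κ) * (‖w1‖ + ‖w2‖) ≤ Rm / 2 := by
    have h2 : ((η + κ) * (‖w1‖ + ‖w2‖))^2 ≤ (Rm / 2)^2 := by
      have hs2 : (‖w1‖ + ‖w2‖)^2 ≤ 2 * (‖w1‖^2 + ‖w2‖^2) := by
        nlinarith [sq_nonneg (‖w1‖ - ‖w2‖)]
      have h3 : (η + κ)^2 * (‖w1‖^2 + ‖w2‖^2) ≤ Rm^2 / 16 := by
        have h4 := mul_le_mul_of_nonneg_left hsq (le_of_lt (by positivity : (0:ℝ) < (η+κ)^2))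
        have h5 : (η + κ)^2 * (Rm^2 / (16 * (η + κ)^2)) = Rm^2 / 16 := by
          field_simp
        linarith [h4, h5.le, h5.ge]
      have h6 := mul_le_mul_of_nonneg_left hs2 (sq_nonneg (η + κ))
      have h7 : ((η + κ) * (‖w1‖ + ‖w2‖))^2 = (η + κ)^2 * (‖w1‖ + ‖w2‖)^2 := by ring
      have h8 : (Rm / 2)^2 = Rm^2 / 4 := by ring
      rw [h7, h8]
      linarith [h6, h3, sq_nonneg Rm]
    have hpos : 0 ≤ (η + κ) * (‖w1‖ + ‖w2‖) := mul_nonneg (le_of_lt hηκ) (add_nonneg hn1 hn2)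
    exact (pow_le_pow_iff_left₀ hpos (by positivity) (by norm_num)).mp h2
  have ha1 : -⟪w1, g1⟫ ≤ η * ‖w1‖ := by have := abs_le.mp hg1; linarith [this.1]
  have ha2 : -⟪w2, g2⟫ ≤ η * ‖w2‖ := by have := abs_le.mp hg2; linarith [this.1]
  have had : -d ≤ κ * (‖w1‖ + ‖w2‖) := by have := abs_le.mp hd; linarith [this.1]
  have hBt : 0 ≤ θB * θ1 := mul_nonneg hB0 h10
  have key : θB * θ1 * (⟪w1, g1⟫ + ⟪w2, g2⟫ + d + R) ≥ θB * θ1 * (Rm / 2) := by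
    have hstuff : Rm / 2 ≤ ⟪w1, g1⟫ + ⟪w2, g2⟫ + d + R := by linarith [ha1, ha2, had, hsum, hR]
    exact mul_le_mul_of_nonneg_left hstuff hBt
  constructor
  · rw [e1, e2, hdθ1]
    nlinarith [hh1]
  · nlinarith [mul_nonneg hBt hRm.le, sq_nonneg ‖w1‖, sq_nonneg ‖w2‖,
      mul_nonneg hlam.le (add_nonneg (sq_nonneg ‖w1‖) (sq_nonneg ‖w2‖))]
end
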